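/- Let X be a Tychonoff space such that C_p(X) admits a continuous linear surjection onto a metrizable locally convex space (equivalently has a metrizable quotient by a closed subspace); then that quotient is separable. In particular, every metrizable quotient of C_p(X) by a closed vector subspace is separable. -/

import Mathlib

open Filter Topology TopologicalSpace

/-- `C_p(X)`: the space `C(X, ℝ)` retopologized with the topology of pointwise
convergence (induced from the product `ℝ^X`). -/
def Cp (X : Type*) [TopologicalSpace X] : Type _ := C(X, ℝ)

instance (X : Type*) [TopologicalSpace X] : AddCommGroup (Cp X) :=
  inferInstanceAs (AddCommGroup C(X, ℝ))

noncomputable instance (X : Type*) [TopologicalSpace X] : Module ℝ (Cp X) :=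
  inferInstanceAs (Module ℝ C(X, ℝ))

/-- The underlying function of an element of `C_p(X)`. -/
def Cp.toFun {X : Type*} [TopologicalSpace X] (f : Cp X) : X → ℝ :=
  ContinuousMap.toFun f

instance (X : Type*) [TopologicalSpace X] : TopologicalSpace (Cp X) :=
  TopologicalSpace.induced Cp.toFun inferInstance

/-!
`C_p(X)` sits densely in `ℝ^X`, since on a Tychonoff space continuous functions interpolate
arbitrary values on finite sets. The product of standard Gaussian measures on `ℝ^X` gives every
nonempty basic open box positive mass, so a disjoint family of nonempty open sets, each of which
contains such a box, is countable: `ℝ^X` has countable cellularity. This property passes to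
dense subspaces and to continuous images, so `E` has it. In a metric space the `ε/2`-balls
around a maximal `ε`-separated set are disjoint, so countable cellularity makes every such
`ε`-net countable, and `E` is separable.
-/

open MeasureTheory ProbabilityTheory Set
open scoped NNReal ENNReal

def CountableCellularity (X : Type*) [TopologicalSpace X] : Prop :=
  ∀ a : Set (Set X), a.PairwiseDisjoint id → (∀ U ∈ a, IsOpen U) →
    (∀ U ∈ a, U.Nonempty) → a.Countable

namespace CountableCellularity

variable {X Y : Type*} [TopologicalSpace X] [TopologicalSpace Y]

theorem countable_of_pairwiseDisjoint (hX : CountableCellularity X) {ι : Type*} {s : ι → Set X}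
    {a : Set ι} (h : a.PairwiseDisjoint s) (ha : ∀ i ∈ a, IsOpen (s i))
    (h'a : ∀ i ∈ a, (s i).Nonempty) : a.Countable := by
  have hinj : InjOn s a := fun i hi j hj hij => by
    by_contra hne
    obtain ⟨x, hx⟩ := h'a i hi
    exact Set.disjoint_left.mp (h hi hj hne) hx (hij ▸ hx)
  refine countable_of_injective_of_countable_image hinj (hX _ ?_ ?_ ?_)
  · rintro _ ⟨i, hi, rfl⟩ _ ⟨j, hj, rfl⟩ hne
    exact h hi hj fun hij => hne (congrArg s hij)
  · rintro _ ⟨i, hi, rfl⟩; exact ha i hi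
  · rintro _ ⟨i, hi, rfl⟩; exact h'a i hi

theorem of_surjective (hX : CountableCellularity X) {f : X → Y} (hf : Continuous f)
    (hsurj : Function.Surjective f) : CountableCellularity Y := fun _ hd ho hne =>
  hX.countable_of_pairwiseDisjoint (s := (f ⁻¹' ·))
    (fun _ hU _ hV hUV => (hd hU hV hUV).preimage f)
    (fun U hU => (ho U hU).preimage hf) (fun U hU => (hne U hU).preimage hsurj)

theorem of_isInducing_denseRange (hY : CountableCellularity Y) {f : X → Y} (hf : IsInducing f)
    (hd : DenseRange f) : CountableCellularity X := by
  intro a had hao hane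
  choose! V hVo hVf using fun U hU => hf.isOpen_iff.mp (hao U hU)
  refine hY.countable_of_pairwiseDisjoint (s := V) ?_ hVo fun U hU => ?_
  · intro U hU U' hU' hne
    rw [Function.onFun, Set.disjoint_iff_inter_eq_empty]
    by_contra hnonempty
    obtain ⟨x, hx⟩ := hd.exists_mem_open ((hVo U hU).inter (hVo U' hU'))
      (nonempty_iff_ne_empty.mpr hnonempty)
    have hxU : x ∈ U := hVf U hU ▸ hx.1
    have hxU' : x ∈ U' := hVf U' hU' ▸ hx.2
    exact Set.disjoint_left.mp (had hU hU' hne) hxU hxU'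
  · obtain ⟨x, hx⟩ := hane U hU
    exact ⟨f x, show x ∈ f ⁻¹' V U by rwa [hVf U hU]⟩

theorem exists_countable_isCover {X : Type*} [PseudoEMetricSpace X]
    (hX : CountableCellularity X) {ε : ℝ≥0} (hε : 0 < ε) :
    ∃ N : Set X, N.Countable ∧ Metric.IsCover ε univ N := by
  obtain ⟨N, hN⟩ := zorn_subset {N : Set X | N ⊆ univ ∧ Metric.IsSeparated ε N}
    fun c hc hchain =>
      ⟨⋃₀ c, ⟨subset_univ _, hchain.pairwise_sUnion.mpr fun s hs => (hc hs).2⟩,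
        fun _ => subset_sUnion_of_mem⟩
  refine ⟨N, hX.countable_of_pairwiseDisjoint (s := (Metric.eball · (ε / 2))) ?_
    (fun _ _ => Metric.isOpen_eball)
    (fun x _ => ⟨x, Metric.mem_eball_self (by simpa using hε.ne')⟩),
    Metric.IsCover.of_maximal_isSeparated hN⟩
  intro x hx y hy hxy
  refine Set.disjoint_left.mpr fun z hzx hzy => (hN.1.2 hx hy hxy).not_ge ?_
  calc edist x y ≤ edist z x + edist z y := edist_triangle_left _ _ _
    _ ≤ ε / 2 + ε / 2 := add_le_add (Metric.mem_eball.mp hzx).le (Metric.mem_eball.mp hzy).le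
    _ = ε := ENNReal.add_halves _

theorem separableSpace [PseudoMetrizableSpace X] (hX : CountableCellularity X) :
    SeparableSpace X := by
  let := pseudoMetrizableSpacePseudoMetric X
  have : SecondCountableTopology X := Metric.secondCountable_of_almost_dense_set fun ε hε => by
    obtain ⟨N, hNc, hN⟩ := hX.exists_countable_isCover (ε := ε.toNNReal) (by simpa using hε)
    exact ⟨N, hNc, fun x => (hN (mem_univ x)).imp fun y ⟨hy, hxy⟩ =>
      ⟨hy, (edist_le_ofReal hε.le).mp hxy⟩⟩
  infer_instance

end CountableCellularity

theorem countableCellularity_of_exists_measurableSet_pos {X : Type*} [TopologicalSpace X]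
    [MeasurableSpace X] (μ : Measure X) [IsFiniteMeasure μ]
    (h : ∀ U, IsOpen U → U.Nonempty → ∃ V ⊆ U, MeasurableSet V ∧ 0 < μ V) :
    CountableCellularity X := by
  intro a hd ho hne
  choose V hVU hVm hVpos using fun U : a => h U (ho U U.2) (hne U U.2)
  have hVd : Pairwise (Function.onFun Disjoint V) := fun U U' hUU' =>
    (hd U.2 U'.2 (Subtype.coe_ne_coe.mpr hUU')).mono (hVU U) (hVU U')
  have :=
    Measure.countable_meas_pos_of_disjoint_of_meas_iUnion_ne_top μ hVm hVd (measure_ne_top _ _)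
  simp only [hVpos, ofPred_true, countable_univ_iff] at this
  exact countable_coe_iff.mp this

theorem countableCellularity_pi {ι : Type*} {α : ι → Type*} [∀ i, TopologicalSpace (α i)]
    [∀ i, MeasurableSpace (α i)] [∀ i, OpensMeasurableSpace (α i)]
    (μ : ∀ i, Measure (α i)) [∀ i, IsProbabilityMeasure (μ i)]
    [∀ i, (μ i).IsOpenPosMeasure] :
    CountableCellularity (∀ i, α i) := by
  refine countableCellularity_of_exists_measurableSet_pos (Measure.infinitePi μ) ?_
  rintro U hU ⟨f, hf⟩
  obtain ⟨I, u, hu, hIU⟩ := isOpen_pi_iff.mp hU f hf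
  refine ⟨_, hIU, .pi I.countable_toSet fun i hi => (hu i hi).1.measurableSet, ?_⟩
  rw [Measure.infinitePi_pi _ fun i hi => (hu i hi).1.measurableSet]
  exact CanonicallyOrderedAdd.prod_pos.mpr fun i hi =>
    (hu i hi).1.measure_pos _ ⟨f i, (hu i hi).2⟩

theorem ContinuousMap.exists_eqOn_finset {X : Type*} [TopologicalSpace X] [T1Space X]
    [CompletelyRegularSpace X] (s : Finset X) (c : X → ℝ) :
    ∃ g : C(X, ℝ), ∀ x ∈ s, g x = c x := by
  classical
  have hbump (x : X) :
      ∃ φ : X → unitInterval, Continuous φ ∧ φ x = 0 ∧ EqOn φ 1 ↑(s.erase x) :=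
    CompletelyRegularSpace.completely_regular x _ (s.erase x).finite_toSet.isClosed (by simp)
  choose φ hφc hφx hφs using hbump
  -- `1 - φ x` is a Lagrange basis function: `1` at `x`, `0` on the rest of `s`.
  refine ⟨⟨fun y => ∑ x ∈ s, c x * (1 - φ x y), by fun_prop⟩, fun x₀ hx₀ => ?_⟩
  rw [ContinuousMap.coe_mk, Finset.sum_eq_single_of_mem x₀ hx₀ fun x hx hne => ?_, hφx,
    Set.Icc.coe_zero, sub_zero, mul_one]
  rw [hφs x (Finset.mem_erase.mpr ⟨Ne.symm hne, hx₀⟩)]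
  simp

namespace Cp

variable (X : Type*) [TopologicalSpace X]

theorem isInducing_toFun : IsInducing (Cp.toFun : Cp X → X → ℝ) := ⟨rfl⟩

theorem denseRange_toFun [T1Space X] [CompletelyRegularSpace X] :
    DenseRange (Cp.toFun : Cp X → X → ℝ) := by
  refine dense_iff_inter_open.mpr fun U hU ⟨f, hf⟩ => ?_
  obtain ⟨I, u, hu, hIU⟩ := isOpen_pi_iff.mp hU f hf
  obtain ⟨g, hg⟩ := ContinuousMap.exists_eqOn_finset I f
  refine ⟨g, hIU fun x hx => ?_, g, rfl⟩
  exact (hg x hx).symm ▸ (hu x hx).2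

theorem countableCellularity [T1Space X] [CompletelyRegularSpace X] :
    CountableCellularity (Cp X) :=
  haveI := (gaussianReal_absolutelyContinuous' 0 one_ne_zero).isOpenPosMeasure
  (countableCellularity_pi fun _ : X => gaussianReal 0 1).of_isInducing_denseRange
    (isInducing_toFun X) (denseRange_toFun X)

end Cp

theorem stmt_17_general (X : Type*) [TopologicalSpace X] [T35Space X]
    (E : Type*) [AddCommGroup E] [Module ℝ E] [TopologicalSpace E]
    [MetrizableSpace E]
    (T : Cp X →L[ℝ] E) (hsurj : Function.Surjective T) :
    SeparableSpace E :=
  ((Cp.countableCellularity X).of_surjective T.continuous hsurj).separableSpace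

/-- Every metrizable locally convex space which is the image of `C_p(X)` (`X` Tychonoff)
under a continuous linear surjection (in particular every metrizable quotient of `C_p(X)`
by a closed vector subspace) is separable. -/
theorem stmt_17 (X : Type*) [TopologicalSpace X] [T35Space X]
    (E : Type*) [AddCommGroup E] [Module ℝ E] [TopologicalSpace E]
    [MetrizableSpace E] [LocallyConvexSpace ℝ E]
    (T : Cp X →L[ℝ] E) (hsurj : Function.Surjective T) :
    SeparableSpace E :=
  stmt_17_general X E T hsurj
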